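/- arXiv:2309.00847 — 3 statements merged into one kernel-verified Lean document; each statement's English description precedes it below -/
import Mathlib

section
/- Let (X,d) be a metric space, μ a Borel measure on X, x₀ ∈ X, N > 1 and A ∈ (0,∞), and suppose lim_{ρ→0⁺} μ(B_ρ(x₀))/(ω_N ρ^N) = A. Then liminf_{λ→∞} λ^{N/2} ∫_X e^{−2λ d(x₀,x)²} dμ(x) ≥ (π/2)^{N/2} · A. -/
/-!
Superlevel sets of `x ↦ exp (-2λ d(x₀, x)²)` are balls, so by the layer-cake formula the Gaussian
integral is `∫₀¹ μ(B(x₀, √(-log t / 2λ))) dt`. By the density hypothesis `λ^{N/2}` times the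
integrand tends to `A ω_N (-log t / 2)^{N/2}`, and Fatou's lemma bounds the liminf from below by
`A ω_N 2^{-N/2} ∫₀¹ (-log t)^{N/2} dt = A ω_N 2^{-N/2} Γ(N/2 + 1) = (π/2)^{N/2} A`, the last
integral being Euler's after the substitution `t = e^{-u}`.
-/

open MeasureTheory Set Filter

/-- `ω_N = π^{N/2} / Γ(N/2 + 1)`, the volume of the unit ball in dimension `N`. -/
noncomputable def omegaN (N : ℝ) : ℝ := Real.pi ^ (N / 2) / Real.Gamma (N / 2 + 1)

open Real Metric Topology
open scoped ENNReal

lemma omegaN_pos {N : ℝ} (hN : -2 < N) : 0 < omegaN N :=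
  div_pos (rpow_pos_of_pos pi_pos _) (Gamma_pos_of_pos (by linarith))

lemma lintegral_Ioo_neg_log_rpow {s : ℝ} (hs : -1 < s) :
    ∫⁻ t in Ioo (0 : ℝ) 1, ENNReal.ofReal ((-log t) ^ s) = ENNReal.ofReal (Gamma (s + 1)) := by
  have hderiv : ∀ u ∈ Ioi (0 : ℝ), HasDerivWithinAt (fun u ↦ exp (-u)) (-exp (-u)) (Ioi 0) u :=
    fun u _ ↦ by simpa using ((hasDerivAt_neg u).exp).hasDerivWithinAt
  have hinj : InjOn (fun u : ℝ ↦ exp (-u)) (Ioi 0) := fun a _ b _ h ↦ by simpa using h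
  have himage : (fun u : ℝ ↦ exp (-u)) '' Ioi 0 = Ioo 0 1 := by
    ext t
    constructor
    · rintro ⟨u, hu, rfl⟩
      exact ⟨exp_pos _, exp_lt_one_iff.2 (neg_lt_zero.2 hu)⟩
    · intro ht
      exact ⟨-log t, neg_pos.2 (log_neg ht.1 ht.2), by simp [exp_log ht.1]⟩
  rw [← himage, lintegral_image_eq_lintegral_abs_deriv_mul measurableSet_Ioi hderiv hinj,
    Gamma_eq_integral (by linarith), ofReal_integral_eq_lintegral_ofReal]
  · refine setLIntegral_congr_fun measurableSet_Ioi fun u hu ↦ ?_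
    simp only [abs_neg, abs_of_pos (exp_pos _), log_exp, neg_neg, add_sub_cancel_right]
    rw [ENNReal.ofReal_mul (exp_pos _).le]
  · simpa [IntegrableOn] using GammaIntegral_convergent (s := s + 1) (by linarith)
  · filter_upwards [ae_restrict_mem measurableSet_Ioi] with u hu
    exact mul_nonneg (exp_pos _).le (rpow_nonneg (le_of_lt hu) _)

lemma setOf_lt_exp_neg_mul_dist_sq {X : Type*} [PseudoMetricSpace X] (x₀ : X) {c t : ℝ}
    (hc : 0 < c) (ht : 0 < t) :
    {x | t < exp (-c * dist x₀ x ^ 2)} = ball x₀ (√(-log t / c)) := by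
  ext x
  rw [mem_ofPred_eq, mem_ball', ← log_lt_iff_lt_exp ht, lt_sqrt dist_nonneg, lt_div_iff₀ hc]
  constructor <;> intro h <;> linarith

lemma lintegral_exp_neg_mul_dist_sq_eq_lintegral_measure_ball {X : Type*} [PseudoMetricSpace X]
    [MeasurableSpace X] [OpensMeasurableSpace X] (μ : Measure X) (x₀ : X) {c : ℝ} (hc : 0 < c) :
    ∫⁻ x, ENNReal.ofReal (exp (-c * dist x₀ x ^ 2)) ∂μ =
      ∫⁻ t in Ioi 0, μ (ball x₀ (√(-log t / c))) := by
  rw [lintegral_eq_lintegral_meas_lt μ (ae_of_all _ fun x ↦ (exp_pos _).le) (by fun_prop)]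
  exact setLIntegral_congr_fun measurableSet_Ioi fun t ht ↦ by
    rw [setOf_lt_exp_neg_mul_dist_sq x₀ hc ht]

lemma rpow_div_two_mul_sqrt_div_rpow {lam L : ℝ} (N : ℝ) (hlam : 0 < lam) (hL : 0 ≤ L) :
    lam ^ (N / 2) * √(L / lam) ^ N = L ^ (N / 2) := by
  rw [sqrt_eq_rpow, ← rpow_mul (div_nonneg hL hlam.le), one_div_mul_eq_div,
    ← mul_rpow hlam.le (div_nonneg hL hlam.le), mul_div_cancel₀ L hlam.ne']

lemma tendsto_rpow_mul_measure_ball_sqrt_div {X : Type*} [PseudoMetricSpace X]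
    [MeasurableSpace X] (μ : Measure X) (x₀ : X) {N c A L : ℝ} (hc : c ≠ 0) (hA : A ≠ 0)
    (hL : 0 < L) (hlim : Tendsto (fun ρ ↦ (μ (ball x₀ ρ)).toReal / (c * ρ ^ N)) (𝓝[>] 0) (𝓝 A)) :
    Tendsto (fun lam ↦ ENNReal.ofReal (lam ^ (N / 2)) * μ (ball x₀ (√(L / lam)))) atTop
      (𝓝 (ENNReal.ofReal (A * (c * L ^ (N / 2))))) := by
  have hradius : Tendsto (fun lam ↦ √(L / lam)) atTop (𝓝[>] 0) := by
    refine tendsto_nhdsWithin_iff.2 ⟨?_, ?_⟩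
    · simpa using (tendsto_const_nhds.div_atTop tendsto_id).sqrt
    · filter_upwards [eventually_gt_atTop 0] with lam hlam using sqrt_pos.2 (div_pos hL hlam)
  have hratio := hlim.comp hradius
  refine (ENNReal.tendsto_ofReal (hratio.mul_const _)).congr' ?_
  filter_upwards [eventually_gt_atTop 0, hratio.eventually_ne hA] with lam hlam hne
  -- `toReal` sends `∞` to `0`, so a nonzero ratio certifies that the ball has finite measure.
  have hfin : μ (ball x₀ (√(L / lam))) ≠ ∞ := fun h ↦ hne (by simp [h])
  have hr : 0 < √(L / lam) := sqrt_pos.2 (div_pos hL hlam)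
  rw [Function.comp_apply, ← rpow_div_two_mul_sqrt_div_rpow N hlam hL.le,
    ← ENNReal.ofReal_toReal hfin, ← ENNReal.ofReal_mul (rpow_nonneg hlam.le _)]
  congr 1
  rw [ENNReal.toReal_ofReal ENNReal.toReal_nonneg]
  have := rpow_pos_of_pos hr N
  field_simp

lemma lintegral_Ioo_mul_omegaN_mul_neg_log_div_two_rpow {N A : ℝ} (hN : -2 < N) (hA : 0 ≤ A) :
    ∫⁻ t in Ioo (0 : ℝ) 1, ENNReal.ofReal (A * (omegaN N * (-log t / 2) ^ (N / 2))) =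
      ENNReal.ofReal ((π / 2) ^ (N / 2) * A) := by
  have hΓ := Gamma_pos_of_pos (by linarith : 0 < N / 2 + 1)
  set C := A * π ^ (N / 2) / 2 ^ (N / 2) / Gamma (N / 2 + 1)
  have hC : 0 ≤ C := by positivity
  have hsplit : ∀ t ∈ Ioo (0 : ℝ) 1, ENNReal.ofReal (A * (omegaN N * (-log t / 2) ^ (N / 2))) =
      ENNReal.ofReal C * ENNReal.ofReal ((-log t) ^ (N / 2)) := fun t ht ↦ by
    rw [← ENNReal.ofReal_mul hC, div_rpow (neg_nonneg.2 (log_nonpos ht.1.le ht.2.le)) zero_le_two,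
      omegaN]
    congr 1
    simp only [C]
    ring
  rw [setLIntegral_congr_fun measurableSet_Ioo hsplit,
    lintegral_const_mul' _ _ ENNReal.ofReal_ne_top, lintegral_Ioo_neg_log_rpow (by linarith),
    ← ENNReal.ofReal_mul hC, div_rpow pi_pos.le zero_le_two]
  congr 1
  rw [div_mul_cancel₀ _ hΓ.ne']
  ring

/-- If the small-ball density of `μ` at `x₀` tends to `A`, then
`liminf_{λ → ∞} λ^{N/2} ∫_X e^{-2λ d(x₀,x)²} dμ ≥ (π/2)^{N/2} A`. -/
theorem gaussian_liminf_ge {X : Type*} [MetricSpace X] [MeasurableSpace X] [BorelSpace X]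
    (μ : Measure X) (x₀ : X) (N A : ℝ) (hN : 1 < N) (hA : 0 < A)
    (hlim : Tendsto (fun ρ => (μ (Metric.ball x₀ ρ)).toReal / (omegaN N * ρ ^ N))
      (nhdsWithin 0 (Ioi 0)) (nhds A)) :
    ENNReal.ofReal ((Real.pi / 2) ^ (N / 2) * A) ≤
      liminf (fun lam : ℝ =>
          ENNReal.ofReal (lam ^ (N / 2)) *
            ∫⁻ x, ENNReal.ofReal (Real.exp (-2 * lam * dist x₀ x ^ 2)) ∂μ)
        atTop := by
  set f : ℝ → ℝ → ℝ≥0∞ := fun lam t ↦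
    ENNReal.ofReal (lam ^ (N / 2)) * μ (ball x₀ (√(-log t / 2 / lam)))
  have hf_meas : ∀ lam, Measurable (f lam) := fun lam ↦
    ((Monotone.measurable fun r s hrs ↦ measure_mono (ball_subset_ball hrs)).comp
      (by fun_prop)).const_mul _
  have hf_tendsto : ∀ t ∈ Ioo (0 : ℝ) 1, Tendsto (fun lam ↦ f lam t) atTop
      (𝓝 (ENNReal.ofReal (A * (omegaN N * (-log t / 2) ^ (N / 2))))) := fun t ht ↦
    tendsto_rpow_mul_measure_ball_sqrt_div μ x₀ (omegaN_pos (by linarith)).ne' hA.ne'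
      (by linarith [log_neg ht.1 ht.2]) hlim
  have hf_le : ∀ᶠ lam in atTop, ∫⁻ t in Ioo 0 1, f lam t ≤ ENNReal.ofReal (lam ^ (N / 2)) *
      ∫⁻ x, ENNReal.ofReal (exp (-2 * lam * dist x₀ x ^ 2)) ∂μ := by
    filter_upwards [eventually_gt_atTop 0] with lam hlam
    rw [neg_mul, lintegral_exp_neg_mul_dist_sq_eq_lintegral_measure_ball μ x₀ (by positivity),
      ← lintegral_const_mul' _ _ ENNReal.ofReal_ne_top]
    simp only [f, div_mul_eq_div_div]
    exact lintegral_mono_set Ioo_subset_Ioi_self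
  calc ENNReal.ofReal ((π / 2) ^ (N / 2) * A)
      = ∫⁻ t in Ioo 0 1, ENNReal.ofReal (A * (omegaN N * (-log t / 2) ^ (N / 2))) :=
        (lintegral_Ioo_mul_omegaN_mul_neg_log_div_two_rpow (by linarith) hA.le).symm
    _ = ∫⁻ t in Ioo 0 1, liminf (fun lam ↦ f lam t) atTop :=
        setLIntegral_congr_fun measurableSet_Ioo fun t ht ↦ (hf_tendsto t ht).liminf_eq.symm
    _ ≤ liminf (fun lam ↦ ∫⁻ t in Ioo 0 1, f lam t) atTop := lintegral_liminf_le hf_meas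
    _ ≤ _ := liminf_le_liminf hf_le
end

section
/- Let p, q, N be real numbers with 0 < q < 2 < p and 2 < N < 2(p−q)/(p−2). Let (X,d) be a metric space, μ a Borel measure on X, x₀ ∈ X and k > 0, and suppose μ(B_ρ(x₀)) = k ω_N ρ^N for all ρ > 0. Then for every λ > 0 the equality ((2−q)/(p−2)) ∫_X (λ + d(x₀,x)^{2−q})^{(2p−2)/(2−p)} d(x₀,x)^{2−2q} dμ = ((N−q)/p) ∫_X (λ + d(x₀,x)^{2−q})^{p/(2−p)} d(x₀,x)^{−q} dμ holds; i.e. the functions (λ + d_{x₀}^{2−q})^{1/(2−p)} realize equality in the integral form of the Caffarelli–Kohn–Nirenberg inequality on a volume cone. -/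
/-!
Pushing `μ` forward along `d_{x₀}` turns it into the measure `k ω_N N r^{N-1} dr` on `(0, ∞)`,
so both sides become one-dimensional integrals. With `a = 2 - q`, `b = p / (2 - p)` and
`m = N - q`, the identity is `∫₀^∞ G' = 0` for `G r = (λ + r^a)^b r^m`: `G` vanishes at `0`
because `m > 0` and at `∞` because `a b + m < 0`, which is exactly `N < 2(p - q)/(p - 2)`.
-/

open MeasureTheory Set Filter Topology

section RadialProfile

variable {a b l m : ℝ}

lemma rpow_add_rpow_rpow_le_rpow_mul {r : ℝ} (hr : 0 < r) (hl : 0 ≤ l) (hb : b ≤ 0) :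
    (l + r ^ a) ^ b ≤ r ^ (a * b) := by
  rw [Real.rpow_mul hr.le]
  exact Real.rpow_le_rpow_of_nonpos (by positivity) (le_add_of_nonneg_left hl) hb

lemma integrableOn_Ioi_rpow_add_rpow_mul_rpow (hl : 0 < l) (hb : b ≤ 0) {s : ℝ}
    (hs : -1 < s) (hbs : s + a * b < -1) :
    IntegrableOn (fun r : ℝ => (l + r ^ a) ^ b * r ^ s) (Ioi 0) := by
  have hmeas : AEStronglyMeasurable (fun r : ℝ => (l + r ^ a) ^ b * r ^ s) := by fun_prop
  have near_zero : IntegrableOn (fun r : ℝ => (l + r ^ a) ^ b * r ^ s) (Ioc 0 1) := by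
    have hdom : IntegrableOn (fun r : ℝ => l ^ b * r ^ s) (Ioc 0 1) :=
      ((integrableOn_Ioc_iff_integrableOn_Ioo (by simp)).2
        ((intervalIntegral.integrableOn_Ioo_rpow_iff zero_lt_one).2 hs)).const_mul _
    refine hdom.mono' hmeas.restrict ?_
    filter_upwards [ae_restrict_mem measurableSet_Ioc] with r hr
    have hr0 : 0 < r := hr.1
    rw [Real.norm_of_nonneg (by positivity)]
    exact mul_le_mul_of_nonneg_right
      (Real.rpow_le_rpow_of_nonpos hl (le_add_of_nonneg_right (by positivity)) hb) (by positivity)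
  have near_top : IntegrableOn (fun r : ℝ => (l + r ^ a) ^ b * r ^ s) (Ioi 1) := by
    have hdom : IntegrableOn (fun r : ℝ => r ^ (a * b) * r ^ s) (Ioi 1) := by
      refine (integrableOn_Ioi_rpow_of_lt (a := a * b + s) (by linarith) one_pos).congr_fun
        (fun r hr => ?_) measurableSet_Ioi
      rw [← Real.rpow_add (one_pos.trans hr), add_comm]
    refine hdom.mono' hmeas.restrict ?_
    filter_upwards [ae_restrict_mem measurableSet_Ioi] with r hr
    have hr0 : 0 < r := one_pos.trans hr
    rw [Real.norm_of_nonneg (by positivity)]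
    exact mul_le_mul_of_nonneg_right (rpow_add_rpow_rpow_le_rpow_mul hr0 hl.le hb) (by positivity)
  simpa only [Ioc_union_Ioi_eq_Ioi zero_le_one] using near_zero.union near_top

lemma hasDerivAt_rpow_add_rpow_mul_rpow {r : ℝ} (hr : 0 < r) (hl : 0 ≤ l) :
    HasDerivAt (fun r : ℝ => (l + r ^ a) ^ b * r ^ m)
      (a * b * ((l + r ^ a) ^ (b - 1) * r ^ (a + m - 1)) +
        m * ((l + r ^ a) ^ b * r ^ (m - 1))) r := by
  have hpos : 0 < l + r ^ a := by positivity
  have hinner : HasDerivAt (fun r : ℝ => l + r ^ a) (a * r ^ (a - 1)) r :=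
    (Real.hasDerivAt_rpow_const (Or.inl hr.ne')).const_add l
  refine ((hinner.rpow_const (p := b) (Or.inl hpos.ne')).mul
    (Real.hasDerivAt_rpow_const (p := m) (Or.inl hr.ne'))).congr_deriv ?_
  rw [show a + m - 1 = a - 1 + m by ring, Real.rpow_add hr]
  ring

lemma tendsto_rpow_add_rpow_mul_rpow_atTop (hl : 0 ≤ l) (hb : b ≤ 0) (hm : a * b + m < 0) :
    Tendsto (fun r : ℝ => (l + r ^ a) ^ b * r ^ m) atTop (𝓝 0) := by
  have hdom : Tendsto (fun r : ℝ => r ^ (a * b + m)) atTop (𝓝 0) := by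
    simpa using tendsto_rpow_neg_atTop (y := -(a * b + m)) (by linarith)
  refine squeeze_zero' ?_ ?_ hdom
  · filter_upwards [eventually_gt_atTop 0] with r hr
    positivity
  · filter_upwards [eventually_gt_atTop 0] with r hr
    rw [Real.rpow_add hr]
    gcongr
    exact rpow_add_rpow_rpow_le_rpow_mul hr hl hb

theorem mul_integral_Ioi_rpow_add_rpow_mul_rpow (ha : 0 < a) (hl : 0 < l) (hm : 0 < m)
    (hconv : a * b + m < 0) :
    m * ∫ r in Ioi 0, (l + r ^ a) ^ b * r ^ (m - 1) =
      -(a * b) * ∫ r in Ioi 0, (l + r ^ a) ^ (b - 1) * r ^ (a + m - 1) := by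
  have hb : b < 0 := neg_of_mul_neg_right (by linarith) ha.le
  have hA := integrableOn_Ioi_rpow_add_rpow_mul_rpow (a := a) hl hb.le (s := m - 1)
    (by linarith) (by linarith)
  have hB := integrableOn_Ioi_rpow_add_rpow_mul_rpow (a := a) hl (b := b - 1) (by linarith)
    (s := a + m - 1) (by linarith) (by linarith)
  have hcont : ContinuousWithinAt (fun r : ℝ => (l + r ^ a) ^ b * r ^ m) (Ici 0) 0 := by
    refine ContinuousAt.continuousWithinAt (ContinuousAt.mul ?_ ?_)
    · refine ((Real.continuousAt_rpow_const 0 a (Or.inr ha.le)).const_add l).rpow_const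
        (Or.inl ?_)
      simpa [Real.zero_rpow ha.ne'] using hl.ne'
    · exact Real.continuousAt_rpow_const 0 m (Or.inr hm.le)
  have hparts := integral_Ioi_of_hasDerivAt_of_tendsto hcont
    (fun r hr => hasDerivAt_rpow_add_rpow_mul_rpow hr hl.le) ((hB.const_mul _).add
      (hA.const_mul _)) (tendsto_rpow_add_rpow_mul_rpow_atTop hl.le hb.le hconv)
  rw [integral_add (hB.const_mul _) (hA.const_mul _), integral_const_mul, integral_const_mul,
    Real.zero_rpow hm.ne', mul_zero, sub_zero] at hparts
  linarith

end RadialProfile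

lemma MeasureTheory.Measure.ext_of_Iio {α : Type*} [TopologicalSpace α] [MeasurableSpace α]
    [SecondCountableTopology α] [LinearOrder α] [OrderTopology α] [BorelSpace α] [NoMaxOrder α]
    {μ ν : Measure α} (h : ∀ ρ, μ (Iio ρ) = ν (Iio ρ)) (hfin : ∀ ρ, μ (Iio ρ) ≠ ⊤) :
    μ = ν := by
  refine Measure.ext_of_Ico' _ _ (fun a b _ => ne_top_of_le_ne_top (hfin b)
    (measure_mono Ico_subset_Iio_self)) (fun a b hab => ?_)
  have hIco : Ico a b = Iio b \ Iio a := by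
    ext
    simp
  rw [hIco, measure_sdiff (Iio_subset_Iio hab.le) measurableSet_Iio.nullMeasurableSet
    (hfin a), measure_sdiff (Iio_subset_Iio hab.le) measurableSet_Iio.nullMeasurableSet
    (h a ▸ hfin a), h, h]

noncomputable def coneRadialMeasure (C N : ℝ) : Measure ℝ :=
  (volume.restrict (Ioi 0)).withDensity fun r => ENNReal.ofReal (C * N * r ^ (N - 1))

lemma coneRadialMeasure_Iio {C N : ℝ} (hC : 0 ≤ C) (hN : 0 < N) (ρ : ℝ) :
    coneRadialMeasure C N (Iio ρ) = ENNReal.ofReal (C * max ρ 0 ^ N) := by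
  rw [coneRadialMeasure, withDensity_apply _ measurableSet_Iio,
    Measure.restrict_restrict measurableSet_Iio, Iio_inter_Ioi]
  rcases le_or_gt ρ 0 with hρ | hρ
  · rw [Ioo_eq_empty (not_lt.2 hρ), Measure.restrict_empty, lintegral_zero_measure,
      max_eq_right hρ, Real.zero_rpow hN.ne', mul_zero, ENNReal.ofReal_zero]
  have hint : IntegrableOn (fun r : ℝ => C * N * r ^ (N - 1)) (Ioo 0 ρ) :=
    (intervalIntegral.integrableOn_Ioo_rpow_iff hρ).2 (by linarith) |>.const_mul _
  rw [← ofReal_integral_eq_lintegral_ofReal hint, max_eq_left hρ.le, integral_const_mul,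
    ← integral_Ioc_eq_integral_Ioo, ← intervalIntegral.integral_of_le hρ.le,
    integral_rpow (Or.inl (by linarith)), sub_add_cancel, Real.zero_rpow hN.ne']
  · rw [sub_zero]
    field_simp
  · filter_upwards [ae_restrict_mem measurableSet_Ioo] with r hr
    exact mul_nonneg (by positivity) (Real.rpow_nonneg hr.1.le _)

section VolumeCone

variable {X : Type*} [MetricSpace X] [MeasurableSpace X] [BorelSpace X] {μ : Measure X}
  {x₀ : X} {C N : ℝ}

lemma map_dist_Iio (hN : 0 < N)
    (hcone : ∀ ρ > (0:ℝ), μ (Metric.ball x₀ ρ) = ENNReal.ofReal (C * ρ ^ N)) (ρ : ℝ) :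
    μ.map (dist x₀) (Iio ρ) = ENNReal.ofReal (C * max ρ 0 ^ N) := by
  have hpre : dist x₀ ⁻¹' Iio ρ = Metric.ball x₀ ρ := by
    ext x
    simp [dist_comm]
  have hdist : Measurable (dist x₀) := (continuous_const.dist continuous_id).measurable
  rw [Measure.map_apply hdist measurableSet_Iio, hpre]
  rcases le_or_gt ρ 0 with hρ | hρ
  · rw [Metric.ball_eq_empty.2 hρ, measure_empty, max_eq_right hρ, Real.zero_rpow hN.ne',
      mul_zero, ENNReal.ofReal_zero]
  · rw [hcone ρ hρ, max_eq_left hρ.le]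

lemma map_dist_eq_coneRadialMeasure (hC : 0 ≤ C) (hN : 0 < N)
    (hcone : ∀ ρ > (0:ℝ), μ (Metric.ball x₀ ρ) = ENNReal.ofReal (C * ρ ^ N)) :
    μ.map (dist x₀) = coneRadialMeasure C N :=
  Measure.ext_of_Iio (fun ρ => by rw [map_dist_Iio hN hcone, coneRadialMeasure_Iio hC hN])
    (fun ρ => by simp [map_dist_Iio hN hcone])

lemma integral_mul_dist_rpow_eq (hC : 0 ≤ C) (hN : 0 < N)
    (hcone : ∀ ρ > (0:ℝ), μ (Metric.ball x₀ ρ) = ENNReal.ofReal (C * ρ ^ N))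
    {f : ℝ → ℝ} (hf : Measurable f) (s : ℝ) :
    ∫ x, f (dist x₀ x) * dist x₀ x ^ s ∂μ = C * N * ∫ r in Ioi 0, f r * r ^ (s + N - 1) := by
  have hdist : Measurable (dist x₀) := (continuous_const.dist continuous_id).measurable
  rw [← integral_map (f := fun r => f r * r ^ s) hdist.aemeasurable (by fun_prop),
    map_dist_eq_coneRadialMeasure hC hN hcone, coneRadialMeasure,
    integral_withDensity_eq_integral_toReal_smul (by fun_prop)
      (Eventually.of_forall fun _ => ENNReal.ofReal_lt_top), ← integral_const_mul]
  refine setIntegral_congr_fun measurableSet_Ioi fun r (hr : 0 < r) => ?_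
  rw [ENNReal.toReal_ofReal (mul_nonneg (by positivity) (Real.rpow_nonneg hr.le _)), smul_eq_mul,
    add_sub_assoc, Real.rpow_add hr]
  ring

end VolumeCone

theorem ckn_equality_on_volume_cone_general (p q N : ℝ)
    (hq2 : q < 2) (hp : 2 < p)
    (hN1 : 2 < N) (hN2 : N < 2 * (p - q) / (p - 2))
    {X : Type*} [MetricSpace X] [MeasurableSpace X] [BorelSpace X]
    (μ : Measure X) (x₀ : X) (k : ℝ) (hk : 0 < k)
    (hcone : ∀ ρ > (0:ℝ), μ (Metric.ball x₀ ρ) = ENNReal.ofReal (k * omegaN N * ρ ^ N))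
    (lam : ℝ) (hlam : 0 < lam) :
    ((2 - q) / (p - 2)) *
        ∫ x, (lam + dist x₀ x ^ (2 - q)) ^ ((2 * p - 2) / (2 - p)) *
          dist x₀ x ^ (2 - 2 * q) ∂μ =
      ((N - q) / p) *
        ∫ x, (lam + dist x₀ x ^ (2 - q)) ^ (p / (2 - p)) * dist x₀ x ^ (-q) ∂μ := by
  have hp2 : p - 2 ≠ 0 := by linarith
  have h2p : 2 - p ≠ 0 := by linarith
  have hω : 0 < omegaN N :=
    div_pos (Real.rpow_pos_of_pos Real.pi_pos _) (Real.Gamma_pos_of_pos (by linarith))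
  have hconv : (2 - q) * (p / (2 - p)) + (N - q) < 0 := by
    have hN2' : N * (p - 2) < 2 * (p - q) := (lt_div_iff₀ (by linarith)).1 hN2
    rw [show (2 - q) * (p / (2 - p)) + (N - q) = (N * (p - 2) - 2 * (p - q)) / (p - 2) by
      field_simp; ring]
    exact div_neg_of_neg_of_pos (by linarith) (by linarith)
  have hparts := mul_integral_Ioi_rpow_add_rpow_mul_rpow (a := 2 - q) (m := N - q) (by linarith)
    hlam (by linarith) hconv
  rw [integral_mul_dist_rpow_eq (f := fun r => (lam + r ^ (2 - q)) ^ ((2 * p - 2) / (2 - p)))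
      (by positivity) (by linarith) hcone (by fun_prop),
    integral_mul_dist_rpow_eq (f := fun r => (lam + r ^ (2 - q)) ^ (p / (2 - p)))
      (by positivity) (by linarith) hcone (by fun_prop),
    show (2 * p - 2) / (2 - p) = p / (2 - p) - 1 by field_simp; ring,
    show 2 - 2 * q + N - 1 = 2 - q + (N - q) - 1 by ring, show -q + N - 1 = N - q - 1 by ring]
  -- the integrals are abstracted so that `field_simp` leaves their exponents alone
  set IA := ∫ r in Ioi 0, (lam + r ^ (2 - q)) ^ (p / (2 - p)) * r ^ (N - q - 1)
  set IB := ∫ r in Ioi 0, (lam + r ^ (2 - q)) ^ (p / (2 - p) - 1) * r ^ (2 - q + (N - q) - 1)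
  field_simp at hparts ⊢
  linear_combination hparts

/-- On an `N`-volume cone at `x₀` with density `k`, the functions
`(λ + d_{x₀}^{2-q})^{1/(2-p)}` realize equality in the integral form of the
Caffarelli–Kohn–Nirenberg inequality. -/
theorem ckn_equality_on_volume_cone (p q N : ℝ)
    (hq : 0 < q) (hq2 : q < 2) (hp : 2 < p)
    (hN1 : 2 < N) (hN2 : N < 2 * (p - q) / (p - 2))
    {X : Type*} [MetricSpace X] [MeasurableSpace X] [BorelSpace X]
    (μ : Measure X) (x₀ : X) (k : ℝ) (hk : 0 < k)
    (hcone : ∀ ρ > (0:ℝ), μ (Metric.ball x₀ ρ) = ENNReal.ofReal (k * omegaN N * ρ ^ N))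
    (lam : ℝ) (hlam : 0 < lam) :
    ((2 - q) / (p - 2)) *
        ∫ x, (lam + dist x₀ x ^ (2 - q)) ^ ((2 * p - 2) / (2 - p)) *
          dist x₀ x ^ (2 - 2 * q) ∂μ =
      ((N - q) / p) *
        ∫ x, (lam + dist x₀ x ^ (2 - q)) ^ (p / (2 - p)) * dist x₀ x ^ (-q) ∂μ :=
  ckn_equality_on_volume_cone_general p q N hq2 hp hN1 hN2 μ x₀ k hk hcone lam hlam
end

section
/- Let (X,d) be a metric space, x₀ ∈ X, let p, q be real numbers with 0 < q < 2 < p, let λ > 0, and define v_λ(x) := (λ + d(x₀,x)^{2−q})^{1/(2−p)}. Then for every x ∈ X with x ≠ x₀, the local Lipschitz constant of v_λ satisfies lip v_λ(x) ≤ ((2−q)/(p−2)) (λ + d(x₀,x)^{2−q})^{(p−1)/(2−p)} d(x₀,x)^{1−q}. -/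
/-!
Write `v_λ = f ∘ d_{x₀}` with `f s = (λ + s^{2-q})^{1/(2-p)}`. Since `d_{x₀}` is 1-Lipschitz and
`f` is differentiable at `t = d(x₀,x) > 0`, near `x` we get
`|v_λ y - v_λ x| ≤ (|f'(t)| + ε) d(x,y)`, so `lip v_λ(x) ≤ |f'(t)|`, and `|f'(t)|` is exactly the
right-hand side.
-/

open Filter

/-- The local Lipschitz constant `lip u(x) = limsup_{y → x} |u y - u x| / d(x,y)`
(equal to `0`, by convention of `Real` limsups, if `x` is an isolated point). -/
noncomputable def lipConst {X : Type*} [MetricSpace X] (u : X → ℝ) (x : X) : ℝ :=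
  limsup (fun y => |u y - u x| / dist x y) (nhdsWithin x {x}ᶜ)

open Topology NNReal

lemma lipConst_le_of_forall_eventually_le {X : Type*} [MetricSpace X] {u : X → ℝ} {x : X}
    {C : ℝ} (hC : 0 ≤ C) (h : ∀ ε > 0, ∀ᶠ y in 𝓝[≠] x, |u y - u x| ≤ (C + ε) * dist x y) :
    lipConst u x ≤ C := by
  rcases (𝓝[≠] x).eq_or_neBot with hbot | _
  · rw [lipConst, hbot, limsup_eq]
    -- over `⊥` the limsup is `sInf univ`, which is `0` in `ℝ`
    simpa only [eventually_bot, Set.ofPred_true, Real.sInf_univ] using hC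
  refine le_of_forall_pos_le_add fun ε hε => limsup_le_of_le ?_ ?_
  · exact isCoboundedUnder_le_of_le _ fun y => div_nonneg (abs_nonneg _) dist_nonneg
  · filter_upwards [h ε hε] with y hy
    exact div_le_of_le_mul₀ dist_nonneg (by linarith) hy

lemma lipConst_comp_le_of_hasDerivAt {X : Type*} [MetricSpace X] {g : X → ℝ} {K : ℝ≥0}
    (hg : LipschitzWith K g) {x : X} {f : ℝ → ℝ} {f' : ℝ} (hf : HasDerivAt f f' (g x)) :
    lipConst (f ∘ g) x ≤ K * |f'| := by
  refine lipConst_le_of_forall_eventually_le (by positivity) fun ε hε => ?_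
  have hε' : 0 < ε / (K + 1) := by positivity
  have hlin : ∀ᶠ s in 𝓝 (g x), |f s - f (g x)| ≤ (|f'| + ε / (K + 1)) * |s - g x| := by
    filter_upwards [(hasDerivAt_iff_isLittleO.mp hf).def hε'] with s hs
    simp only [smul_eq_mul, Real.norm_eq_abs] at hs
    have := abs_sub_abs_le_abs_sub (f s - f (g x)) ((s - g x) * f')
    rw [abs_mul] at this
    linarith
  filter_upwards [nhdsWithin_le_nhds (hg.continuous.continuousAt.eventually hlin)] with y hy
  have hgy : |g y - g x| ≤ K * dist x y := by
    rw [← Real.dist_eq, dist_comm x]; exact hg.dist_le_mul y x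
  calc |f (g y) - f (g x)| ≤ (|f'| + ε / (K + 1)) * (K * dist x y) :=
        hy.trans (mul_le_mul_of_nonneg_left hgy (by positivity))
    _ ≤ (K * |f'| + ε) * dist x y := by
        rw [← mul_assoc]
        refine mul_le_mul_of_nonneg_right ?_ dist_nonneg
        have : (K : ℝ) * (ε / (K + 1)) ≤ ε := by
          rw [mul_div_assoc', div_le_iff₀ (by positivity)]; nlinarith
        nlinarith

lemma hasDerivAt_add_rpow_rpow {c : ℝ} (hc : 0 ≤ c) (a b : ℝ) {s : ℝ} (hs : 0 < s) :
    HasDerivAt (fun s => (c + s ^ a) ^ b) (b * (c + s ^ a) ^ (b - 1) * (a * s ^ (a - 1))) s := by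
  have hw : 0 < c + s ^ a := by positivity
  exact (Real.hasDerivAt_rpow_const (Or.inl hw.ne')).comp s
    ((Real.hasDerivAt_rpow_const (Or.inl hs.ne')).const_add c)

theorem lipConst_ckn_extremal_le_general {X : Type*} [MetricSpace X] (x₀ : X)
    (p q : ℝ) (hq2 : q < 2) (hp : 2 < p)
    (lam : ℝ) (hlam : 0 < lam) (x : X) (hx : x ≠ x₀) :
    lipConst (fun y => (lam + dist x₀ y ^ (2 - q)) ^ ((1:ℝ) / (2 - p))) x ≤
      ((2 - q) / (p - 2)) * (lam + dist x₀ x ^ (2 - q)) ^ ((p - 1) / (2 - p)) *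
        dist x₀ x ^ (1 - q) := by
  have ht : 0 < dist x₀ x := dist_pos.mpr hx.symm
  refine (lipConst_comp_le_of_hasDerivAt (LipschitzWith.dist_right x₀)
    (hasDerivAt_add_rpow_rpow hlam.le (2 - q) (1 / (2 - p)) ht)).trans_eq ?_
  have hexp : (1:ℝ) / (2 - p) - 1 = (p - 1) / (2 - p) := by
    rw [div_sub_one (by linarith)]
    ring
  rw [hexp, show 2 - q - 1 = 1 - q by ring, NNReal.coe_one, one_mul, abs_mul, abs_mul, abs_mul,
    abs_div, abs_one, abs_of_neg (by linarith : 2 - p < 0), abs_of_pos (by linarith : 0 < 2 - q),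
    abs_of_nonneg (by positivity : 0 ≤ (lam + dist x₀ x ^ (2 - q)) ^ ((p - 1) / (2 - p))),
    abs_of_nonneg (by positivity : 0 ≤ dist x₀ x ^ (1 - q))]
  ring

/-- Pointwise bound, away from `x₀`, for the local Lipschitz constant of
`v_λ = (λ + d(x₀,·)^{2-q})^{1/(2-p)}`. -/
theorem lipConst_ckn_extremal_le {X : Type*} [MetricSpace X] (x₀ : X)
    (p q : ℝ) (hq : 0 < q) (hq2 : q < 2) (hp : 2 < p)
    (lam : ℝ) (hlam : 0 < lam) (x : X) (hx : x ≠ x₀) :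
    lipConst (fun y => (lam + dist x₀ y ^ (2 - q)) ^ ((1:ℝ) / (2 - p))) x ≤
      ((2 - q) / (p - 2)) * (lam + dist x₀ x ^ (2 - q)) ^ ((p - 1) / (2 - p)) *
        dist x₀ x ^ (1 - q) :=
  lipConst_ckn_extremal_le_general x₀ p q hq2 hp lam hlam x hx
end
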